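/- arXiv:1709.04888 — 4 statements merged into one kernel-verified Lean document; each statement's English description precedes it below -/
import Mathlib

section
/- Let N ≥ 3, γ < (N-2)^2/4, Γ = √((N-2)^2/4 - γ), β_- = (N-2)/2 - Γ, α_N = (4Γ²N/(N-2))^((N-2)/4). Then for every μ > 0, the function U_μ(x) = α_N μ^Γ / (|x|^{β_-} (μ^{4Γ/(N-2)} + |x|^{4Γ/(N-2)})^{(N-2)/2}) satisfies -ΔU_μ - γ U_μ/|x|² = U_μ^{(N+2)/(N-2)} on R^N \ {0}. -/
/-!
Write `c = (N - 2)/2`, so that `γ = c² - Γ²`, and `U(x) = C F(|x|²)` with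
`F(s) = s^p (m + s^q)^(-c)`, `p = (Γ - c)/2`, `q = Γ/c`, `m = μ^(2Γ/c)`, `C = α_N μ^Γ`.
For a function of `s = |x|²` the Laplacian is `4 s F'' + 2 N F'`. In terms of the logarithmic
derivative `L = F'/F` one has `F''/F = L² + L'`, and for these exponents
`4 s (L² + L') + 2 N L + γ/s` collapses to `-(4Γ²N/(N-2)) m s^(q-1) (m + s^q)^(-2)`, which is
`-(4Γ²N/(N-2)) m F^(2/c)`. Hence `-ΔU - γ U/|x|² = (4Γ²N/(N-2)) m C^(-2/c) U^(1+2/c)`, and `α_N`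
is the constant that makes this coefficient `1`.
-/

/-- Coordinate-wise Laplacian of a function on `ℝ^N`. -/
noncomputable def lap {N : ℕ} (f : EuclideanSpace ℝ (Fin N) → ℝ)
    (x : EuclideanSpace ℝ (Fin N)) : ℝ :=
  ∑ i : Fin N, iteratedDeriv 2 (fun t : ℝ => f (x + t • EuclideanSpace.single i (1 : ℝ))) 0

open Real Filter Topology

theorem iteratedDeriv_two_comp {F F₁ q q' : ℝ → ℝ} {a f₂ q'' : ℝ}
    (hF : ∀ᶠ s in 𝓝 (q a), HasDerivAt F (F₁ s) s) (hF₁ : HasDerivAt F₁ f₂ (q a))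
    (hq : ∀ᶠ t in 𝓝 a, HasDerivAt q (q' t) t) (hq' : HasDerivAt q' q'' a) :
    iteratedDeriv 2 (F ∘ q) a = f₂ * q' a ^ 2 + F₁ (q a) * q'' := by
  have hqa : ContinuousAt q a := hq.self_of_nhds.continuousAt
  have hderiv : deriv (F ∘ q) =ᶠ[𝓝 a] fun t => F₁ (q t) * q' t := by
    filter_upwards [hqa.eventually hF, hq] with t hFt hqt
    exact (hFt.comp t hqt).deriv
  have hd : HasDerivAt (fun t => F₁ (q t) * q' t) (f₂ * q' a * q' a + F₁ (q a) * q'') a :=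
    (hF₁.comp a hq.self_of_nhds).mul hq'
  rw [iteratedDeriv_succ, iteratedDeriv_one, hderiv.deriv_eq, hd.deriv]
  ring

section InnerProductSpace

variable {E : Type*} [NormedAddCommGroup E] [InnerProductSpace ℝ E]

theorem hasDerivAt_norm_add_smul_sq (x v : E) (t : ℝ) :
    HasDerivAt (fun t : ℝ => ‖x + t • v‖ ^ 2) (2 * inner ℝ x v + 2 * t * ‖v‖ ^ 2) t := by
  have h : (fun t : ℝ => ‖x + t • v‖ ^ 2)
      = fun t => ‖x‖ ^ 2 + 2 * inner ℝ x v * t + ‖v‖ ^ 2 * t ^ 2 := by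
    ext t
    rw [norm_add_sq_real, real_inner_smul_right, norm_smul, mul_pow, Real.norm_eq_abs, sq_abs]
    ring
  rw [h]
  refine ((((hasDerivAt_id t).const_mul (2 * inner ℝ x v)).const_add (‖x‖ ^ 2)).fun_add
    ((hasDerivAt_pow 2 t).const_mul (‖v‖ ^ 2))).congr_deriv ?_
  simp only [Nat.cast_ofNat]
  ring

theorem iteratedDeriv_two_comp_norm_sq {F F₁ F₂ : ℝ → ℝ}
    (hF : ∀ s, 0 < s → HasDerivAt F (F₁ s) s) (hF₁ : ∀ s, 0 < s → HasDerivAt F₁ (F₂ s) s)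
    {U : E → ℝ} (hU : ∀ y, y ≠ 0 → U y = F (‖y‖ ^ 2)) {x : E} (hx : x ≠ 0) (v : E) :
    iteratedDeriv 2 (fun t : ℝ => U (x + t • v)) 0
      = 4 * inner ℝ x v ^ 2 * F₂ (‖x‖ ^ 2) + 2 * ‖v‖ ^ 2 * F₁ (‖x‖ ^ 2) := by
  set q : ℝ → ℝ := fun t => ‖x + t • v‖ ^ 2
  have hq0 : q 0 = ‖x‖ ^ 2 := by simp [q]
  have hpos : 0 < q 0 := by rw [hq0]; positivity
  have hline : (fun t : ℝ => U (x + t • v)) =ᶠ[𝓝 0] F ∘ q := by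
    have hcont : ContinuousAt (fun t : ℝ => x + t • v) 0 := by fun_prop
    filter_upwards [hcont.eventually_ne (by simpa using hx)] with t ht
    exact hU _ ht
  have hq' : HasDerivAt (fun t => 2 * inner ℝ x v + 2 * t * ‖v‖ ^ 2) (2 * ‖v‖ ^ 2) 0 := by
    simpa using
      (((hasDerivAt_id (0 : ℝ)).const_mul 2).mul_const (‖v‖ ^ 2)).const_add (2 * inner ℝ x v)
  rw [hline.iteratedDeriv_eq, iteratedDeriv_two_comp
    ((eventually_gt_nhds hpos).mono hF) (hF₁ _ hpos)
    (Eventually.of_forall (hasDerivAt_norm_add_smul_sq x v)) hq', hq0]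
  ring

end InnerProductSpace

theorem lap_eq_of_eq_comp_norm_sq {N : ℕ} {F F₁ F₂ : ℝ → ℝ}
    (hF : ∀ s, 0 < s → HasDerivAt F (F₁ s) s) (hF₁ : ∀ s, 0 < s → HasDerivAt F₁ (F₂ s) s)
    {U : EuclideanSpace ℝ (Fin N) → ℝ} (hU : ∀ y, y ≠ 0 → U y = F (‖y‖ ^ 2))
    {x : EuclideanSpace ℝ (Fin N)} (hx : x ≠ 0) :
    lap U x = 4 * ‖x‖ ^ 2 * F₂ (‖x‖ ^ 2) + 2 * N * F₁ (‖x‖ ^ 2) := by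
  simp only [lap, iteratedDeriv_two_comp_norm_sq hF hF₁ hU hx, EuclideanSpace.inner_single_right,
    PiLp.norm_single, norm_one, conj_trivial, one_mul, Finset.sum_add_distrib, ← Finset.sum_mul,
    ← Finset.mul_sum, ← EuclideanSpace.real_norm_sq_eq, Finset.sum_const, Finset.card_univ,
    Fintype.card_fin, nsmul_eq_mul]
  ring

theorem hasDerivAt_rpow_const_of_pos {s : ℝ} (hs : 0 < s) (q : ℝ) :
    HasDerivAt (fun s : ℝ => s ^ q) (q * s ^ q / s) s := by
  simpa [rpow_sub_one hs.ne', mul_div_assoc] using hasDerivAt_rpow_const (p := q) (Or.inl hs.ne')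

section RadialProfile

variable (m q p e : ℝ)

noncomputable def radialProfile (s : ℝ) : ℝ := s ^ p * (m + s ^ q) ^ e

noncomputable def radialProfileLogDeriv (s : ℝ) : ℝ := p / s + e * q * s ^ q / (s * (m + s ^ q))

noncomputable def radialProfileLogDerivDeriv (s : ℝ) : ℝ :=
  -p / s ^ 2 + e * q * s ^ q * ((q - 1) * m - s ^ q) / (s ^ 2 * (m + s ^ q) ^ 2)

variable {m q p e}

theorem hasDerivAt_radialProfile (hm : 0 ≤ m) {s : ℝ} (hs : 0 < s) :
    HasDerivAt (radialProfile m q p e)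
      (radialProfile m q p e s * radialProfileLogDeriv m q p e s) s := by
  have hw : 0 < m + s ^ q := by positivity
  have h := (hasDerivAt_rpow_const_of_pos hs p).mul
    (((hasDerivAt_rpow_const_of_pos hs q).const_add m).rpow_const (p := e) (Or.inl hw.ne'))
  refine h.congr_deriv ?_
  rw [rpow_sub_one hw.ne']
  simp only [radialProfile, radialProfileLogDeriv]
  field_simp

theorem hasDerivAt_radialProfileLogDeriv (hm : 0 ≤ m) {s : ℝ} (hs : 0 < s) :
    HasDerivAt (radialProfileLogDeriv m q p e)
      (radialProfileLogDerivDeriv m q p e s) s := by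
  have hw : 0 < m + s ^ q := by positivity
  have hv := hasDerivAt_rpow_const_of_pos hs q
  have h := ((hasDerivAt_id s).fun_inv hs.ne').const_mul p |>.fun_add
    ((hv.const_mul (e * q)).fun_div ((hasDerivAt_id s).fun_mul (hv.const_add m))
      (by positivity))
  refine h.congr_deriv ?_
  simp only [id, radialProfileLogDerivDeriv]
  field_simp
  ring

theorem hasDerivAt_radialProfile_mul_logDeriv (hm : 0 ≤ m) {s : ℝ} (hs : 0 < s) :
    HasDerivAt (fun s => radialProfile m q p e s * radialProfileLogDeriv m q p e s)
      (radialProfile m q p e s *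
        (radialProfileLogDeriv m q p e s ^ 2 + radialProfileLogDerivDeriv m q p e s)) s :=
  ((hasDerivAt_radialProfile hm hs).mul (hasDerivAt_radialProfileLogDeriv hm hs)).congr_deriv
    (by ring)

theorem rpow_one_add_two_div_radialProfile {C c : ℝ} (hC : 0 < C) (hc : c ≠ 0) (hm : 0 ≤ m)
    {s : ℝ} (hs : 0 < s) :
    (C * radialProfile m q p (-c) s) ^ (1 + 2 / c)
      = C * radialProfile m q p (-c) s * (C ^ (2 / c) * s ^ (2 * p / c) / (m + s ^ q) ^ 2) := by
  have hw : 0 < m + s ^ q := by positivity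
  have hF : 0 < C * radialProfile m q p (-c) s := by unfold radialProfile; positivity
  rw [rpow_add hF, rpow_one]
  congr 1
  unfold radialProfile
  rw [mul_rpow hC.le (by positivity), mul_rpow (by positivity) (by positivity), ← rpow_mul hs.le,
    ← rpow_mul hw.le, show -c * (2 / c) = -2 by field_simp, rpow_neg hw.le, mul_div_assoc,
    mul_div_assoc', mul_comm p]
  norm_cast

theorem div_rpow_mul_add_rpow_eq_radialProfile (A : ℝ) {c Γ r : ℝ} (hm : 0 ≤ m) (hr : 0 ≤ r) :
    A / (r ^ (c - Γ) * (m + r ^ (2 * Γ / c)) ^ c)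
      = A * radialProfile m (Γ / c) ((Γ - c) / 2) (-c) (r ^ 2) := by
  rw [radialProfile, ← rpow_natCast, ← rpow_mul hr, ← rpow_mul hr,
    show ((2 : ℕ) : ℝ) * ((Γ - c) / 2) = -(c - Γ) by ring,
    show ((2 : ℕ) : ℝ) * (Γ / c) = 2 * Γ / c by ring,
    rpow_neg hr, rpow_neg (by positivity), div_eq_mul_inv, mul_inv]

theorem radialProfile_ode {c Γ : ℝ} (hc : 0 < c) (hm : 0 ≤ m) {s : ℝ} (hs : 0 < s) :
    4 * s * (radialProfileLogDeriv m (Γ / c) ((Γ - c) / 2) (-c) s ^ 2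
        + radialProfileLogDerivDeriv m (Γ / c) ((Γ - c) / 2) (-c) s)
      + 4 * (c + 1) * radialProfileLogDeriv m (Γ / c) ((Γ - c) / 2) (-c) s + (c ^ 2 - Γ ^ 2) / s
      = -(4 * Γ ^ 2 * (c + 1) / c * m * s ^ (Γ / c - 1) / (m + s ^ (Γ / c)) ^ 2) := by
  have hw : 0 < m + s ^ (Γ / c) := by positivity
  simp only [radialProfileLogDeriv, radialProfileLogDerivDeriv, rpow_sub_one hs.ne']
  field_simp
  ring

end RadialProfile

theorem neg_lap_sub_inv_sq_of_eq_radialProfile {N : ℕ} {c Γ m C : ℝ} (hN : (N : ℝ) = 2 * c + 2)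
    (hc : 0 < c) (hm : 0 < m) (hC : 0 < C) {U : EuclideanSpace ℝ (Fin N) → ℝ}
    (hU : ∀ y, y ≠ 0 → U y = C * radialProfile m (Γ / c) ((Γ - c) / 2) (-c) (‖y‖ ^ 2))
    {x : EuclideanSpace ℝ (Fin N)} (hx : x ≠ 0) :
    C ^ (2 / c) * (-lap U x - (c ^ 2 - Γ ^ 2) * U x / ‖x‖ ^ 2)
      = 4 * Γ ^ 2 * (c + 1) / c * m * U x ^ (1 + 2 / c) := by
  have hs : 0 < ‖x‖ ^ 2 := by positivity
  set G := radialProfile m (Γ / c) ((Γ - c) / 2) (-c)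
  set L := radialProfileLogDeriv m (Γ / c) ((Γ - c) / 2) (-c)
  rw [lap_eq_of_eq_comp_norm_sq (F₁ := fun s => C * (G s * L s))
    (fun s hs => (hasDerivAt_radialProfile hm.le hs).const_mul C)
    (fun s hs => (hasDerivAt_radialProfile_mul_logDeriv hm.le hs).const_mul C) hU hx, hU x hx,
    rpow_one_add_two_div_radialProfile hC hc.ne' hm.le hs,
    show 2 * ((Γ - c) / 2) / c = Γ / c - 1 by field_simp, hN]
  linear_combination (-C ^ (2 / c) * C * G (‖x‖ ^ 2)) * radialProfile_ode (Γ := Γ) hc hm.le hs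

theorem mul_rpow_two_div_of_rpow_half {K μ c Γ : ℝ} (hK : 0 ≤ K) (hμ : 0 ≤ μ) (hc : c ≠ 0) :
    (K ^ (c / 2) * μ ^ Γ) ^ (2 / c) = K * μ ^ (2 * Γ / c) := by
  rw [mul_rpow (by positivity) (by positivity), ← rpow_mul hK, ← rpow_mul hμ,
    show c / 2 * (2 / c) = 1 by field_simp, rpow_one, mul_div_assoc', mul_comm Γ]

/-- The bubbles `U_μ` solve the critical Hardy–Schrödinger equation
`-ΔU_μ - γ U_μ/|x|² = U_μ^{(N+2)/(N-2)}` on `ℝ^N \ {0}`. -/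
theorem bubble_solves (N : ℕ) (hN : 3 ≤ N) (γ Γ βm αN : ℝ)
    (hγ : γ < ((N : ℝ) - 2) ^ 2 / 4)
    (hΓ : Γ = Real.sqrt (((N : ℝ) - 2) ^ 2 / 4 - γ))
    (hβm : βm = ((N : ℝ) - 2) / 2 - Γ)
    (hαN : αN = (4 * Γ ^ 2 * (N : ℝ) / ((N : ℝ) - 2)) ^ (((N : ℝ) - 2) / 4))
    (μ : ℝ) (hμ : 0 < μ)
    (U : EuclideanSpace ℝ (Fin N) → ℝ)
    (hU : ∀ x, U x = αN * μ ^ Γ /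
      (‖x‖ ^ βm * (μ ^ (4 * Γ / ((N : ℝ) - 2)) + ‖x‖ ^ (4 * Γ / ((N : ℝ) - 2))) ^ (((N : ℝ) - 2) / 2))) :
    ∀ x : EuclideanSpace ℝ (Fin N), x ≠ 0 →
      -lap U x - γ * U x / ‖x‖ ^ 2 = U x ^ (((N : ℝ) + 2) / ((N : ℝ) - 2)) := by
  intro x hx
  obtain ⟨c, hc⟩ : ∃ c : ℝ, (N : ℝ) - 2 = 2 * c := ⟨((N : ℝ) - 2) / 2, by ring⟩
  have hNc : (N : ℝ) = 2 * c + 2 := by linarith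
  have hc0 : 0 < c := by
    have : (3 : ℝ) ≤ N := by exact_mod_cast hN
    linarith
  have hΓ0 : 0 < Γ := hΓ ▸ sqrt_pos.mpr (by linarith)
  have hγc : γ = c ^ 2 - Γ ^ 2 := by rw [hΓ, sq_sqrt (by linarith), hc]; ring
  have hK : 0 < 4 * Γ ^ 2 * (c + 1) / c := by positivity
  have hα : αN = (4 * Γ ^ 2 * (c + 1) / c) ^ (c / 2) := by
    rw [hαN, hc, hNc]
    congr 1
    · field_simp
    · ring
  rw [hβm, hc, show 4 * Γ / (2 * c) = 2 * Γ / c by field_simp; ring,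
    mul_div_cancel_left₀ c two_ne_zero] at hU
  have hUF (y : EuclideanSpace ℝ (Fin N)) (_ : y ≠ 0) :=
    (hU y).trans (div_rpow_mul_add_rpow_eq_radialProfile _ (by positivity) (norm_nonneg y))
  have key := neg_lap_sub_inv_sq_of_eq_radialProfile hNc hc0 (by positivity)
    (by rw [hα]; positivity) hUF hx
  rw [hα, mul_rpow_two_div_of_rpow_half hK.le hμ.le hc0.ne', ← hγc] at key
  rw [hc, show ((N : ℝ) + 2) / (2 * c) = 1 + 2 / c by rw [hNc]; field_simp; ring]
  exact mul_left_cancel₀ (by positivity) key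
end

section
/- Let N ≥ 3, γ < (N-2)^2/4 and Γ, β_- as above. The function Z(x) = (1 - |x|^{4Γ/(N-2)}) / (|x|^{β_-} (1 + |x|^{4Γ/(N-2)})^{N/2}) solves the linearized equation -ΔZ - γZ/|x|² = ((N+2)/(N-2)) U^{4/(N-2)} Z on R^N \ {0}, where U(x) = α_N / (|x|^{β_-}(1+|x|^{4Γ/(N-2)})^{(N-2)/2}). -/
/-!
Everything is radial. In the variable `u = ‖x‖²`, which is smooth, `f x = g ‖x‖²` has
`Δf = 4u g''(u) + 2N g'(u)`. With `s = u^c`, `c = 2Γ/(N-2)`, the profile of `Z` is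
`u^{-b} (1+s)^{-m} (1-s)` with `b = β₋/2`, `m = N/2`, and the derivative of
`u^{-b} (1+s)^{-m} q(s)`, `q` a polynomial, is `u^{-b-1} (1+s)^{-m-1} (Tq)(s)` for the
first-order operator `T = weightTransform b c m`. Two applications of `T` reduce the linearized
equation to a polynomial identity in `s`, which holds because `Γ² = (N-2)²/4 - γ`.
-/

open Real Filter Topology Polynomial

section RadialLaplacian

variable {g g' g'' : ℝ → ℝ}

theorem iteratedDeriv_two_comp_quadratic_at_zero
    (hg : ∀ u, 0 < u → HasDerivAt g (g' u) u) (hg' : ∀ u, 0 < u → HasDerivAt g' (g'' u) u)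
    {a p : ℝ} (ha : 0 < a) :
    iteratedDeriv 2 (fun t => g (a + 2 * p * t + t ^ 2)) 0 = 4 * p ^ 2 * g'' a + 2 * g' a := by
  set q : ℝ → ℝ := fun t => a + 2 * p * t + t ^ 2
  have hq : ∀ t, HasDerivAt q (2 * p + 2 * t) t := fun t =>
    ((((hasDerivAt_id t).const_mul (2 * p)).const_add a).add (hasDerivAt_pow 2 t)).congr_deriv
      (by simp)
  have hq_pos : ∀ᶠ t in 𝓝 0, 0 < q t :=
    continuousAt_const.eventually_lt (hq 0).continuousAt (by simpa [q] using ha)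
  have hderiv : deriv (g ∘ q) =ᶠ[𝓝 0] fun t => g' (q t) * (2 * p + 2 * t) :=
    hq_pos.mono fun t ht => ((hg _ ht).comp t (hq t)).deriv
  have hderiv2 : HasDerivAt (fun t => g' (q t) * (2 * p + 2 * t))
      (4 * p ^ 2 * g'' a + 2 * g' a) 0 := by
    have h := ((hg' (q 0) (by simpa [q] using ha)).comp 0 (hq 0)).mul
      ((hasDerivAt_id (0 : ℝ)).const_mul 2 |>.const_add (2 * p))
    exact h.congr_deriv (by simp [q]; ring)
  rw [iteratedDeriv_eq_iterate, Function.iterate_succ_apply', Function.iterate_one]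
  exact (hderiv2.congr_of_eventuallyEq hderiv).deriv

theorem norm_add_smul_single_sq {N : ℕ} (x : EuclideanSpace ℝ (Fin N)) (i : Fin N) (t : ℝ) :
    ‖x + t • EuclideanSpace.single i (1 : ℝ)‖ ^ 2 = ‖x‖ ^ 2 + 2 * x i * t + t ^ 2 := by
  rw [norm_add_sq_real, real_inner_smul_right, EuclideanSpace.inner_single_right, norm_smul,
    PiLp.norm_single, norm_one, mul_one, Real.norm_eq_abs, sq_abs, conj_trivial]
  ring

theorem lap_comp_norm_sq {N : ℕ}
    (hg : ∀ u, 0 < u → HasDerivAt g (g' u) u) (hg' : ∀ u, 0 < u → HasDerivAt g' (g'' u) u)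
    {f : EuclideanSpace ℝ (Fin N) → ℝ} (hf : ∀ y, y ≠ 0 → f y = g (‖y‖ ^ 2))
    {x : EuclideanSpace ℝ (Fin N)} (hx : x ≠ 0) :
    lap f x = 4 * ‖x‖ ^ 2 * g'' (‖x‖ ^ 2) + 2 * N * g' (‖x‖ ^ 2) := by
  have hline : ∀ i : Fin N,
      iteratedDeriv 2 (fun t : ℝ => f (x + t • EuclideanSpace.single i (1 : ℝ))) 0
        = 4 * (x i) ^ 2 * g'' (‖x‖ ^ 2) + 2 * g' (‖x‖ ^ 2) := fun i => by
    have heq : (fun t : ℝ => f (x + t • EuclideanSpace.single i (1 : ℝ)))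
        =ᶠ[𝓝 0] fun t => g (‖x‖ ^ 2 + 2 * x i * t + t ^ 2) := by
      have hcont : Continuous fun t : ℝ => x + t • EuclideanSpace.single i (1 : ℝ) := by
        fun_prop
      filter_upwards [hcont.continuousAt.eventually_ne (by simpa using hx)] with t ht
      rw [hf _ ht, norm_add_smul_single_sq]
    rw [heq.iteratedDeriv_eq, iteratedDeriv_two_comp_quadratic_at_zero hg hg' (by positivity)]
  rw [lap, Finset.sum_congr rfl fun i _ => hline i, Finset.sum_add_distrib, ← Finset.sum_mul,
    ← Finset.mul_sum, ← EuclideanSpace.real_norm_sq_eq, Finset.sum_const, Finset.card_univ,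
    Fintype.card_fin, nsmul_eq_mul]
  ring

end RadialLaplacian

noncomputable def radialWeight (b c m u : ℝ) : ℝ := u ^ (-b) * (1 + u ^ c) ^ (-m)

noncomputable def weightTransform (b c m : ℝ) (q : ℝ[X]) : ℝ[X] :=
  -(C b * (1 + X) + C (m * c) * X) * q + C c * X * (1 + X) * derivative q

section RadialWeight

variable {b c m u : ℝ}

theorem radialWeight_add_one (hu : 0 < u) :
    radialWeight (b + 1) c (m + 1) u = radialWeight b c m u / (u * (1 + u ^ c)) := by
  have hs : 0 < 1 + u ^ c := by positivity
  rw [radialWeight, radialWeight, neg_add, neg_add, rpow_add hu, rpow_add hs, rpow_neg_one,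
    rpow_neg_one]
  field_simp

theorem hasDerivAt_radialWeight_mul_eval (q : ℝ[X]) (hu : 0 < u) :
    HasDerivAt (fun u => radialWeight b c m u * q.eval (u ^ c))
      (radialWeight (b + 1) c (m + 1) u * (weightTransform b c m q).eval (u ^ c)) u := by
  have hs : 0 < 1 + u ^ c := by positivity
  have hpow : HasDerivAt (fun u : ℝ => u ^ c) (c * (u ^ c / u)) u := by
    simpa [rpow_sub_one hu.ne'] using hasDerivAt_rpow_const (p := c) (Or.inl hu.ne')
  have hw : HasDerivAt (fun u : ℝ => u ^ (-b)) (-b * (u ^ (-b) / u)) u := by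
    simpa [rpow_sub_one hu.ne'] using hasDerivAt_rpow_const (p := -b) (Or.inl hu.ne')
  have hv : HasDerivAt (fun u : ℝ => (1 + u ^ c) ^ (-m))
      (c * (u ^ c / u) * (-m) * ((1 + u ^ c) ^ (-m) / (1 + u ^ c))) u := by
    simpa [rpow_sub_one hs.ne'] using (hpow.const_add 1).rpow_const (p := -m) (Or.inl hs.ne')
  have hq := (q.hasDerivAt (u ^ c)).comp u hpow
  refine ((hw.mul hv).mul hq).congr_deriv ?_
  rw [radialWeight_add_one hu, radialWeight, weightTransform]
  simp only [Function.comp_apply, Pi.mul_apply, eval_add, eval_mul, eval_neg, eval_C, eval_X,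
    eval_one]
  field_simp
  ring

end RadialWeight

theorem linearized_profile_identity {n γ Γ b c m : ℝ} (hn : n ≠ 2)
    (hΓ : Γ ^ 2 = (n - 2) ^ 2 / 4 - γ) (hb : b = ((n - 2) / 2 - Γ) / 2)
    (hc : c = 2 * Γ / (n - 2)) (hm : m = n / 2) (s : ℝ) :
    4 * (weightTransform (b + 1) c (m + 1) (weightTransform b c m (1 - X))).eval s
        + 2 * n * (1 + s) * (weightTransform b c m (1 - X)).eval s + γ * (1 + s) ^ 2 * (1 - s)
      = -((n + 2) / (n - 2) * (4 * Γ ^ 2 * n / (n - 2)) * s * (1 - s)) := by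
  have hn' : n - 2 ≠ 0 := sub_ne_zero.mpr hn
  obtain rfl : γ = (n - 2) ^ 2 / 4 - Γ ^ 2 := by linarith
  subst hb hc hm
  simp only [weightTransform, derivative_add, derivative_sub, derivative_mul, derivative_neg,
    derivative_C, derivative_X, derivative_one, derivative_zero, eval_add, eval_sub, eval_mul,
    eval_neg, eval_C, eval_X, eval_one, eval_zero]
  field_simp
  ring

theorem sq_rpow {r : ℝ} (hr : 0 ≤ r) (e : ℝ) : (r ^ 2) ^ e = r ^ (2 * e) := by
  rw [← rpow_natCast_mul hr]; norm_num

theorem radialWeight_sq {b c m r : ℝ} (hr : 0 ≤ r) :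
    radialWeight b c m (r ^ 2) = (r ^ (2 * b) * (1 + r ^ (2 * c)) ^ m)⁻¹ := by
  rw [radialWeight, rpow_neg (sq_nonneg r), rpow_neg (by positivity), sq_rpow hr, sq_rpow hr,
    mul_inv]

theorem bubble_rpow_four_div {n Γ K r : ℝ} (hn : n ≠ 2) (hK : 0 ≤ K) (hr : 0 < r) :
    (K ^ ((n - 2) / 4) / (r ^ ((n - 2) / 2 - Γ) * (1 + r ^ (4 * Γ / (n - 2))) ^ ((n - 2) / 2)))
        ^ (4 / (n - 2))
      = K * (r ^ (4 * Γ / (n - 2)) / (r ^ 2 * (1 + r ^ (4 * Γ / (n - 2))) ^ 2)) := by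
  have hn' : n - 2 ≠ 0 := sub_ne_zero.mpr hn
  have hs : 0 < 1 + r ^ (4 * Γ / (n - 2)) := by positivity
  rw [div_rpow (by positivity) (by positivity), mul_rpow (by positivity) (by positivity),
    ← rpow_mul hK, ← rpow_mul hr.le, ← rpow_mul hs.le]
  have e1 : (n - 2) / 4 * (4 / (n - 2)) = 1 := by field_simp
  have e2 : ((n - 2) / 2 - Γ) * (4 / (n - 2)) = 2 - 4 * Γ / (n - 2) := by field_simp; ring
  have e3 : (n - 2) / 2 * (4 / (n - 2)) = 2 := by field_simp; ring
  rw [e1, e2, e3, rpow_one, rpow_sub hr, rpow_two, rpow_two]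
  field_simp

/-- The function `Z` solves the linearized equation
`-ΔZ - γZ/|x|² = ((N+2)/(N-2)) U^{4/(N-2)} Z` on `ℝ^N \ {0}`. -/
theorem linearized_solution (N : ℕ) (hN : 3 ≤ N) (γ Γ βm αN : ℝ)
    (hγ : γ < ((N : ℝ) - 2) ^ 2 / 4)
    (hΓ : Γ = Real.sqrt (((N : ℝ) - 2) ^ 2 / 4 - γ))
    (hβm : βm = ((N : ℝ) - 2) / 2 - Γ)
    (hαN : αN = (4 * Γ ^ 2 * (N : ℝ) / ((N : ℝ) - 2)) ^ (((N : ℝ) - 2) / 4))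
    (U Z : EuclideanSpace ℝ (Fin N) → ℝ)
    (hU : ∀ x, U x = αN /
      (‖x‖ ^ βm * (1 + ‖x‖ ^ (4 * Γ / ((N : ℝ) - 2))) ^ (((N : ℝ) - 2) / 2)))
    (hZ : ∀ x, Z x = (1 - ‖x‖ ^ (4 * Γ / ((N : ℝ) - 2))) /
      (‖x‖ ^ βm * (1 + ‖x‖ ^ (4 * Γ / ((N : ℝ) - 2))) ^ ((N : ℝ) / 2))) :
    ∀ x : EuclideanSpace ℝ (Fin N), x ≠ 0 →
      -lap Z x - γ * Z x / ‖x‖ ^ 2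
        = ((N : ℝ) + 2) / ((N : ℝ) - 2) * U x ^ (4 / ((N : ℝ) - 2)) * Z x := by
  intro x hx
  have hn : (2 : ℝ) < N := by exact_mod_cast hN
  have hΓsq : Γ ^ 2 = ((N : ℝ) - 2) ^ 2 / 4 - γ := hΓ ▸ sq_sqrt (by linarith)
  set b := βm / 2
  set c := 2 * Γ / ((N : ℝ) - 2)
  set m := (N : ℝ) / 2
  have h2c : 2 * c = 4 * Γ / ((N : ℝ) - 2) := by ring
  have hZ' : ∀ y,
      Z y = radialWeight b c m (‖y‖ ^ 2) * (1 - X : ℝ[X]).eval ((‖y‖ ^ 2) ^ c) := by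
    intro y
    rw [hZ, radialWeight_sq (norm_nonneg y), sq_rpow (norm_nonneg y), h2c,
      show 2 * b = βm by ring, eval_sub, eval_one, eval_X]
    ring
  have hr := norm_pos_iff.mpr hx
  have hU' := bubble_rpow_four_div (Γ := Γ) (K := 4 * Γ ^ 2 * N / (N - 2)) hn.ne'
    (div_nonneg (by positivity) (by linarith)) hr
  rw [← hαN, ← hβm, ← hU, ← h2c, ← sq_rpow hr.le] at hU'
  have key := linearized_profile_identity (b := b) (c := c) (m := m) hn.ne' hΓsq
    (by simp only [b, hβm]) rfl rfl ((‖x‖ ^ 2) ^ c)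
  rw [lap_comp_norm_sq (fun u hu => hasDerivAt_radialWeight_mul_eval _ hu)
    (fun u hu => hasDerivAt_radialWeight_mul_eval _ hu) (fun y _ => hZ' y) hx, hZ', hU',
    radialWeight_add_one (by positivity), radialWeight_add_one (by positivity)]
  simp only [eval_sub, eval_one, eval_X] at key ⊢
  set u := ‖x‖ ^ 2
  set s := u ^ c
  set W := radialWeight b c m u
  have hu : 0 < u := by positivity
  have hs : 0 < s := by positivity
  linear_combination (norm := skip) -(W / (u * (1 + s) ^ 2)) * key
  field_simp
  ring
end

section
/- Let u ∈ H^1_0(B) be a radial solution of -Δu - γu/|x|² - λu = |u|^{4/(N-2)}u in the unit ball B of R^N with 0 < γ < (N-2)^2/4 (so Γ = √((N-2)^2/4 - γ) > 0). Then the function v(r) = ((N-2)/(2Γ))^{(N-2)/2} r^{((N-2)/2)((N-2)/(2Γ) - 1)} u(r^{(N-2)/(2Γ)}) is a radial solution of -Δv = |v|^{4/(N-2)}v + ε|x|^α v in B \ {0} with v = 0 on ∂B, where α = (N-2)/Γ - 2 and ε = ((N-2)/(2Γ))² λ. -/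
/-!
With `s = r ^ k`, the radial Laplacian of `w r = C * r ^ β * u (r ^ k)` is
`C r^(β-2) (k² s² u'' + k (2β + k + n - 2) s u' + β (β + n - 2) u)`. For
`β = (n - 2)(k - 1)/2` the middle coefficient is `k² (n - 1)`, and for `k = (n - 2)/(2Γ)`
the last one is `k² γ`, so the Hardy term is absorbed and the bracket is `k² s²` times the
Hardy–Schrödinger operator applied to `u` at `s`. The critical nonlinearity is homogeneous:
`C ^ p = k²` and `β p = 2k - 2`, which produces the weight `r ^ (2k - 2) = r ^ α`.
-/

open Real Filter Topology Set

noncomputable def radialLaplacian (n : ℝ) (f : ℝ → ℝ) (r : ℝ) : ℝ :=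
  deriv (deriv f) r + (n - 1) / r * deriv f r

theorem radialLaplacian_congr {n r : ℝ} {f g : ℝ → ℝ} (h : f =ᶠ[𝓝 r] g) :
    radialLaplacian n f r = radialLaplacian n g r := by
  rw [radialLaplacian, radialLaplacian, h.deriv.deriv_eq, h.deriv_eq]

theorem hasDerivAt_const_mul_rpow_mul_comp_rpow {f : ℝ → ℝ} {f' C β k r : ℝ} (hr : 0 < r)
    (hf : HasDerivAt f f' (r ^ k)) :
    HasDerivAt (fun x => C * x ^ β * f (x ^ k))
      (C * r ^ (β - 1) * (β * f (r ^ k) + k * r ^ k * f')) r := by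
  have hpow (e : ℝ) : HasDerivAt (fun x : ℝ => x ^ e) (e * r ^ (e - 1)) r :=
    hasDerivAt_rpow_const (Or.inl hr.ne')
  refine (((hpow β).const_mul C).mul (hf.comp r (hpow k))).congr_deriv ?_
  rw [rpow_sub_one hr.ne', rpow_sub_one hr.ne', Function.comp_apply]
  field_simp

theorem deriv_const_mul_rpow_mul_comp_rpow_eventuallyEq {u : ℝ → ℝ} {C β k r : ℝ}
    (hr : 0 < r)
    (hu : ∀ᶠ s in 𝓝 (r ^ k), DifferentiableAt ℝ u s) :
    deriv (fun x => C * x ^ β * u (x ^ k)) =ᶠ[𝓝 r]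
      fun x => C * x ^ (β - 1) * (β * u (x ^ k) + k * x ^ k * deriv u (x ^ k)) := by
  have hk : Tendsto (fun x : ℝ => x ^ k) (𝓝 r) (𝓝 (r ^ k)) :=
    (continuousAt_rpow_const r k (Or.inl hr.ne')).tendsto
  filter_upwards [hk.eventually hu, Ioi_mem_nhds hr] with x hx hx0
  exact (hasDerivAt_const_mul_rpow_mul_comp_rpow hx0 hx.hasDerivAt).deriv

theorem radialLaplacian_const_mul_rpow_mul_comp_rpow {u : ℝ → ℝ} {n C β k r : ℝ}
    (hr : 0 < r)
    (hu : ∀ᶠ s in 𝓝 (r ^ k), DifferentiableAt ℝ u s)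
    (hu' : DifferentiableAt ℝ (deriv u) (r ^ k)) :
    radialLaplacian n (fun x => C * x ^ β * u (x ^ k)) r =
      C * r ^ (β - 2) * (k ^ 2 * (r ^ k) ^ 2 * deriv (deriv u) (r ^ k)
        + k * (2 * β + k + n - 2) * r ^ k * deriv u (r ^ k) + β * (β + n - 2) * u (r ^ k)) := by
  set s := r ^ k
  have hg : HasDerivAt (fun s => β * u s + k * s * deriv u s)
      ((β + k) * deriv u s + k * s * deriv (deriv u) s) s :=
    ((hu.self_of_nhds.hasDerivAt.const_mul β).add
      (((hasDerivAt_id' s).const_mul k).mul hu'.hasDerivAt)).congr_deriv (by ring)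
  have h2 := (hasDerivAt_const_mul_rpow_mul_comp_rpow (C := C) (β := β - 1) hr hg)
    |>.congr_of_eventuallyEq (deriv_const_mul_rpow_mul_comp_rpow_eventuallyEq hr hu)
  rw [radialLaplacian, h2.deriv,
    (hasDerivAt_const_mul_rpow_mul_comp_rpow hr hu.self_of_nhds.hasDerivAt).deriv,
    show β - 1 - 1 = β - 2 by ring, show β - 1 = β - 2 + 1 by ring, rpow_add_one hr.ne']
  field_simp
  ring

theorem neg_radialLaplacian_eq_of_eventuallyEq_const_mul_rpow_mul_comp_rpow
    {u v : ℝ → ℝ} {n k β C γ lam p r : ℝ} (hr : 0 < r) (hC : 0 ≤ C)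
    (hβ : 2 * β = (n - 2) * (k - 1)) (hβγ : β * (β + n - 2) = k ^ 2 * γ)
    (hCp : C ^ p = k ^ 2) (hβp : β * p = 2 * k - 2)
    (hu : ∀ᶠ s in 𝓝 (r ^ k), DifferentiableAt ℝ u s)
    (hu' : DifferentiableAt ℝ (deriv u) (r ^ k))
    (heq : radialLaplacian n u (r ^ k) + γ * u (r ^ k) / (r ^ k) ^ 2
      = -(|u (r ^ k)| ^ p * u (r ^ k)) - lam * u (r ^ k))
    (hv : v =ᶠ[𝓝 r] fun x => C * x ^ β * u (x ^ k)) :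
    -radialLaplacian n v r = |v r| ^ p * v r + k ^ 2 * lam * r ^ (2 * k - 2) * v r := by
  rw [radialLaplacian_congr hv, hv.eq_of_nhds,
    radialLaplacian_const_mul_rpow_mul_comp_rpow hr hu hu']
  have hs : 0 < r ^ k := rpow_pos_of_pos hr k
  set s := r ^ k
  have hrβ : 0 ≤ r ^ β := (rpow_pos_of_pos hr β).le
  have habs : |C * r ^ β * u s| ^ p = k ^ 2 * r ^ (2 * k - 2) * |u s| ^ p := by
    rw [abs_mul, abs_mul, abs_of_nonneg hC, abs_of_nonneg hrβ,
      mul_rpow (by positivity) (abs_nonneg _), mul_rpow hC hrβ, hCp, ← rpow_mul hr.le, hβp]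
  have hpow : r ^ (2 * k - 2) * r ^ β = r ^ (β - 2) * s ^ 2 := by
    rw [sq, ← rpow_add hr, ← rpow_add hr, ← rpow_add hr]
    ring_nf
  rw [radialLaplacian] at heq
  field_simp at heq
  rw [habs]
  linear_combination (-(C * r ^ (β - 2) * k ^ 2)) * heq
    - (C * r ^ (β - 2) * k * s * deriv u s) * hβ - (C * r ^ (β - 2) * u s) * hβγ
    - (C * k ^ 2 * u s * (|u s| ^ p + lam)) * hpow

theorem radial_change_of_variables_general (N : ℕ) (hN : 3 ≤ N) (γ Γ lam : ℝ)
    (hγ : γ < ((N : ℝ) - 2) ^ 2 / 4)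
    (hΓ : Γ = Real.sqrt (((N : ℝ) - 2) ^ 2 / 4 - γ))
    (u v : ℝ → ℝ)
    (hu2 : ContDiffOn ℝ 2 u (Set.Ioo 0 1))
    (hueq : ∀ r ∈ Set.Ioo (0 : ℝ) 1,
      -(deriv (deriv u) r) - ((N : ℝ) - 1) / r * deriv u r - γ * u r / r ^ 2 - lam * u r
        = |u r| ^ (4 / ((N : ℝ) - 2)) * u r)
    (hu1 : u 1 = 0)
    (hv : ∀ r : ℝ, 0 < r → v r =
      (((N : ℝ) - 2) / (2 * Γ)) ^ (((N : ℝ) - 2) / 2) *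
        r ^ ((((N : ℝ) - 2) / 2) * (((N : ℝ) - 2) / (2 * Γ) - 1)) *
        u (r ^ (((N : ℝ) - 2) / (2 * Γ)))) :
    (∀ r ∈ Set.Ioo (0 : ℝ) 1,
      -(deriv (deriv v) r) - ((N : ℝ) - 1) / r * deriv v r
        = |v r| ^ (4 / ((N : ℝ) - 2)) * v r
          + ((((N : ℝ) - 2) / (2 * Γ)) ^ 2 * lam) * r ^ (((N : ℝ) - 2) / Γ - 2) * v r)
    ∧ v 1 = 0 := by
  have hn : (0 : ℝ) < N - 2 := by
    have : (3 : ℝ) ≤ N := by exact_mod_cast hN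
    linarith
  have hΓpos : 0 < Γ := hΓ ▸ sqrt_pos.2 (by linarith)
  have hΓsq : Γ ^ 2 = ((N : ℝ) - 2) ^ 2 / 4 - γ := by rw [hΓ, sq_sqrt (by linarith)]
  set k := ((N : ℝ) - 2) / (2 * Γ) with hk
  set β := ((N : ℝ) - 2) / 2 * (k - 1)
  have hkpos : 0 < k := by positivity
  have hkΓ : k * Γ = ((N : ℝ) - 2) / 2 := by rw [hk]; field_simp
  have hβγ : β * (β + N - 2) = k ^ 2 * γ := by
    linear_combination (-k ^ 2) * hΓsq + (k * Γ + ((N : ℝ) - 2) / 2) * hkΓ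
  have hCp : (k ^ (((N : ℝ) - 2) / 2)) ^ (4 / ((N : ℝ) - 2)) = k ^ 2 := by
    rw [← rpow_mul hkpos.le,
      show ((N : ℝ) - 2) / 2 * (4 / (N - 2)) = (2 : ℕ) by field_simp; norm_num, rpow_natCast]
  refine ⟨fun r hr => ?_, by rw [hv 1 one_pos, one_rpow, one_rpow, hu1, mul_zero]⟩
  have hs : r ^ k ∈ Ioo (0 : ℝ) 1 :=
    ⟨rpow_pos_of_pos hr.1 k, rpow_lt_one hr.1.le hr.2 hkpos⟩
  have hu : ContDiffAt ℝ 2 u (r ^ k) := hu2.contDiffAt (isOpen_Ioo.mem_nhds hs)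
  have key := neg_radialLaplacian_eq_of_eventuallyEq_const_mul_rpow_mul_comp_rpow (n := N)
    (lam := lam) hr.1 (by positivity) (by ring) hβγ hCp (by field_simp; ring)
    ((hu.eventually (by simp)).mono fun s hs ↦ hs.differentiableAt (by norm_num))
    ((hu.derivWithin (m := 1) (by norm_num)).differentiableAt (by norm_num))
    (by rw [radialLaplacian]; linarith [hueq _ hs])
    (eventuallyEq_of_mem (Ioi_mem_nhds hr.1) hv)
  rw [show ((N : ℝ) - 2) / Γ - 2 = 2 * k - 2 by rw [hk]; field_simp]
  rw [radialLaplacian] at key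
  linarith

/-- The change of variables `v(r) = ((N-2)/(2Γ))^{(N-2)/2} r^{((N-2)/2)((N-2)/(2Γ)-1)}
u(r^{(N-2)/(2Γ)})` turns a radial solution of `-Δu - γu/|x|² - λu = |u|^{4/(N-2)}u` in the
unit ball into a radial solution of `-Δv = |v|^{4/(N-2)}v + ε|x|^α v`,
`α = (N-2)/Γ - 2`, `ε = ((N-2)/(2Γ))² λ`, with `v = 0` on the boundary. -/
theorem radial_change_of_variables (N : ℕ) (hN : 3 ≤ N) (γ Γ lam : ℝ)
    (hγ0 : 0 < γ) (hγ : γ < ((N : ℝ) - 2) ^ 2 / 4)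
    (hΓ : Γ = Real.sqrt (((N : ℝ) - 2) ^ 2 / 4 - γ))
    (u v : ℝ → ℝ)
    (hu2 : ContDiffOn ℝ 2 u (Set.Ioo 0 1))
    (hueq : ∀ r ∈ Set.Ioo (0 : ℝ) 1,
      -(deriv (deriv u) r) - ((N : ℝ) - 1) / r * deriv u r - γ * u r / r ^ 2 - lam * u r
        = |u r| ^ (4 / ((N : ℝ) - 2)) * u r)
    (hu1 : u 1 = 0)
    (hv : ∀ r : ℝ, 0 < r → v r =
      (((N : ℝ) - 2) / (2 * Γ)) ^ (((N : ℝ) - 2) / 2) *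
        r ^ ((((N : ℝ) - 2) / 2) * (((N : ℝ) - 2) / (2 * Γ) - 1)) *
        u (r ^ (((N : ℝ) - 2) / (2 * Γ)))) :
    (∀ r ∈ Set.Ioo (0 : ℝ) 1,
      -(deriv (deriv v) r) - ((N : ℝ) - 1) / r * deriv v r
        = |v r| ^ (4 / ((N : ℝ) - 2)) * v r
          + ((((N : ℝ) - 2) / (2 * Γ)) ^ 2 * lam) * r ^ (((N : ℝ) - 2) / Γ - 2) * v r)
    ∧ v 1 = 0 :=
  radial_change_of_variables_general N hN γ Γ lam hγ hΓ u v hu2 hueq hu1 hv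
end

section
/- Let v be a C² radial solution on (0,1) of -(r^{N-1}v')' = r^{N-1}(|v|^{4/(N-2)}v + ε r^α v) with α > -2, ε > 0, v(0) > 0, v(1) = 0 and lim_{r→0} r^{N-1}v'(r) = 0, and suppose v is nontrivial. Then there exist an integer k ≥ 1 and points 0 = R_0 = r_1 < R_1 < r_2 < ... < R_{k-1} < r_k < R_k = r_{k+1} = 1 such that for all j = 1,...,k: (-1)^{j-1} v > 0 on (R_{j-1}, R_j) with v(R_j) = 0, and (-1)^j v' > 0 on (r_j, r_{j+1}) with v'(r_j) = 0 (with the convention v'(0) = 0). In particular v has finitely many nodal regions. -/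
/-!
With `m = N - 1`, `q = 4 / (N - 2)` and `c = |v|^q + ε t^α`, which is continuous and positive on
`(0,1]`, the equation reads `(t^m v')' = -t^m c v`. On every `[a,t]` with `a > 0` the pair
`(v, t^m v')` then solves a linear first-order system with bounded coefficients, so a double zero
of `v` at `t ∈ (0,1]` would force `v ≡ 0` on `(0,t]`, against `v(0) > 0`. Hence the zeros of `v`
in `(0,1]` are simple, isolated and bounded away from `0`, so they are finitely many:
`0 < R_1 < ⋯ < R_k = 1`, and `v` changes sign at each of them. On the `j`-th nodal interval
`(-1)^(j-1) t^m v'` is strictly decreasing, positive at `R_{j-1}` (it tends to `0` at `t = 0` when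
`j = 1`) and negative at `R_j`, so it vanishes exactly once, at `r_j`.
-/

open Set Filter Topology

theorem eqOn_zero_of_hasDerivWithinAt_clm {E : Type*} [NormedAddCommGroup E] [NormedSpace ℝ E]
    {f : ℝ → E} {L : ℝ → E →L[ℝ] E} {a b K : ℝ} (hL : ∀ t ∈ Ioc a b, ‖L t‖ ≤ K)
    (hf : ContinuousOn f (Icc a b))
    (hf' : ∀ t ∈ Ioc a b, HasDerivWithinAt f (L t (f t)) (Iic t) t) (hb : f b = 0) :
    EqOn f 0 (Icc a b) := by
  have hlip : ∀ t ∈ Ioc a b, LipschitzOnWith K.toNNReal (L t) univ := fun t ht ↦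
    ((L t).lipschitz.weaken (by
      rw [← NNReal.coe_le_coe, coe_nnnorm, Real.coe_toNNReal']
      exact (hL t ht).trans (le_max_left _ _))).lipschitzOnWith
  exact ODE_solution_unique_of_mem_Icc_left (g := fun _ ↦ 0) hlip hf hf' (fun _ _ ↦ trivial)
    continuousOn_const (fun t _ ↦ by simpa using hasDerivWithinAt_const t (Iic t) (0 : E))
    (fun _ _ ↦ trivial) hb

theorem eqOn_zero_of_hasDerivWithinAt_planar {x y p q : ℝ → ℝ} {a b : ℝ}
    (hp : ContinuousOn p (Icc a b)) (hq : ContinuousOn q (Icc a b))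
    (hx : ContinuousOn x (Icc a b)) (hy : ContinuousOn y (Icc a b))
    (hx' : ∀ t ∈ Ioc a b, HasDerivWithinAt x (p t * y t) (Iic t) t)
    (hy' : ∀ t ∈ Ioc a b, HasDerivWithinAt y (q t * x t) (Iic t) t)
    (hxb : x b = 0) (hyb : y b = 0) : EqOn x 0 (Icc a b) := by
  obtain ⟨C, hC⟩ := isCompact_Icc.exists_bound_of_continuousOn (hp.prodMk hq)
  let L : ℝ → ℝ × ℝ →L[ℝ] ℝ × ℝ := fun t ↦
    (p t • ContinuousLinearMap.snd ℝ ℝ ℝ).prod (q t • ContinuousLinearMap.fst ℝ ℝ ℝ)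
  have hL : ∀ t ∈ Ioc a b, ‖L t‖ ≤ C := fun t ht ↦ by
    have hpq := hC t (Ioc_subset_Icc_self ht)
    rw [Prod.norm_def] at hpq
    rw [ContinuousLinearMap.opNorm_prod, Prod.norm_def]
    refine max_le ((norm_smul_le (p t) (ContinuousLinearMap.snd ℝ ℝ ℝ)).trans ?_)
      ((norm_smul_le (q t) (ContinuousLinearMap.fst ℝ ℝ ℝ)).trans ?_)
    · exact (mul_le_of_le_one_right (norm_nonneg _) (ContinuousLinearMap.norm_snd_le ..)).trans
        ((le_max_left _ _).trans hpq)
    · exact (mul_le_of_le_one_right (norm_nonneg _) (ContinuousLinearMap.norm_fst_le ..)).trans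
        ((le_max_right _ _).trans hpq)
  have h := eqOn_zero_of_hasDerivWithinAt_clm (f := fun t ↦ (x t, y t)) hL (hx.prodMk hy)
    (fun t ht ↦ (hx' t ht).prodMk (hy' t ht)) (Prod.ext hxb hyb)
  exact fun t ht ↦ congrArg Prod.fst (h ht)

theorem finite_zeros_of_hasDerivWithinAt {f f' : ℝ → ℝ} {s K : Set ℝ} (hK : IsCompact K)
    (hKs : K ⊆ s) (hf : ∀ x ∈ s, HasDerivWithinAt f (f' x) s x)
    (hsimple : ∀ x ∈ K, f x = 0 → f' x ≠ 0) : (K ∩ f ⁻¹' {0}).Finite := by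
  by_contra hinf
  obtain ⟨x, hxK, hacc⟩ := Set.Infinite.exists_accPt_of_subset_isCompact hinf hK
    inter_subset_left
  rw [accPt_principal_iff_nhdsWithin] at hacc
  have hsub : (K ∩ f ⁻¹' {0}) \ {x} ⊆ s \ {x} :=
    sdiff_subset_sdiff_left (inter_subset_left.trans hKs)
  have hzero : ∀ᶠ y in 𝓝[(K ∩ f ⁻¹' {0}) \ {x}] x, f y = 0 :=
    eventually_nhdsWithin_of_forall fun y hy ↦ hy.1.2
  have hfx : f x = 0 := tendsto_nhds_unique
    (((hf x (hKs hxK)).continuousWithinAt.mono (hsub.trans sdiff_subset)).tendsto)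
    (tendsto_const_nhds.congr' (hzero.mono fun _ h ↦ h.symm))
  have hne := nhdsWithin_mono x hsub ((hf x (hKs hxK)).eventually_ne (c := 0) (hsimple x hxK hfx))
  obtain ⟨y, hy0, hy⟩ := (hzero.and hne).exists
  exact hy hy0

theorem IsPreconnected.pos_of_ne_zero {X : Type*} [TopologicalSpace X] {f : X → ℝ} {s : Set X}
    {y : X} (hs : IsPreconnected s) (hf : ContinuousOn f s) (hf0 : ∀ x ∈ s, f x ≠ 0)
    (hy : y ∈ s) (hfy : 0 < f y) :
    ∀ x ∈ s, 0 < f x := by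
  intro x hx
  by_contra! hfx
  obtain ⟨z, hz, hfz⟩ := hs.intermediate_value hx hy hf ⟨hfx, hfy.le⟩
  exact hf0 z hz hfz

theorem HasDerivWithinAt.nonpos_of_pos_left {f : ℝ → ℝ} {f' a x : ℝ}
    (hf : HasDerivWithinAt f f' (Iic x) x) (hax : a < x) (hfx : f x = 0)
    (hpos : ∀ y ∈ Ioo a x, 0 < f y) : f' ≤ 0 := by
  have hslope := (hasDerivWithinAt_iff_tendsto_slope.mp hf).mono_left
    (nhdsWithin_mono x fun y hy ↦ ⟨hy.2.le, hy.2.ne⟩ : 𝓝[Ioo a x] x ≤ 𝓝[Iic x \ {x}] x)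
  have : (𝓝[Ioo a x] x).NeBot := by
    rw [← mem_closure_iff_nhdsWithin_neBot, closure_Ioo hax.ne]
    exact right_mem_Icc.mpr hax.le
  refine le_of_tendsto hslope (eventually_nhdsWithin_of_forall fun y hy ↦ ?_)
  rw [slope_def_field, hfx, sub_zero]
  exact (div_neg_of_pos_of_neg (hpos y hy) (sub_neg.mpr hy.2)).le

theorem HasDerivAt.exists_neg_right {f : ℝ → ℝ} {f' x b : ℝ} (hf : HasDerivAt f f' x)
    (hxb : x < b) (hfx : f x = 0) (hf' : f' < 0) : ∃ y ∈ Ioo x b, f y < 0 := by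
  have hslope := (hasDerivAt_iff_tendsto_slope.mp hf).mono_left
    (nhdsWithin_mono x fun y (hy : x < y) ↦ hy.ne' : 𝓝[>] x ≤ 𝓝[≠] x)
  obtain ⟨y, hy, hyb⟩ := ((hslope.eventually_lt_const hf').and (Ioo_mem_nhdsGT hxb)).exists
  refine ⟨y, hyb, ?_⟩
  rw [slope_def_field, hfx, sub_zero] at hy
  exact (div_neg_iff.mp hy).resolve_left (fun h ↦ (sub_pos.mpr hyb.1).not_gt h.2) |>.1

theorem StrictAntiOn.neg_of_tendsto_nhdsGT {f : ℝ → ℝ} {a b : ℝ} (hf : StrictAntiOn f (Ioc a b))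
    (hlim : Tendsto f (𝓝[>] a) (𝓝 0)) : ∀ x ∈ Ioc a b, f x < 0 := by
  intro x hx
  have hmid : (a + x) / 2 ∈ Ioc a b := ⟨by linarith [hx.1], by linarith [hx.1, hx.2]⟩
  have hle : f ((a + x) / 2) ≤ 0 := ge_of_tendsto hlim <| by
    filter_upwards [Ioo_mem_nhdsGT hmid.1] with y hy
    exact (hf ⟨hy.1, hy.2.le.trans hmid.2⟩ hmid hy.2).le
  exact (hf hmid hx (by linarith [hx.1])).trans_le hle

theorem neg_one_pow_sub_one {j : ℕ} (hj : 1 ≤ j) : (-1 : ℝ) ^ j = -(-1) ^ (j - 1) := by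
  obtain ⟨i, rfl⟩ := Nat.exists_eq_add_of_le' hj
  simp [pow_succ]

structure IsIncreasingEnum {α : Type*} [Preorder α] (Z : Set α) (a b : α) (k : ℕ) (R : ℕ → α) :
    Prop where
  zero : R 0 = a
  last : R k = b
  lt : ∀ j, 1 ≤ j → j ≤ k → R (j - 1) < R j
  mem : ∀ j, 1 ≤ j → j ≤ k → R j ∈ Z
  notMem : ∀ j, 1 ≤ j → j ≤ k → ∀ x ∈ Ioo (R (j - 1)) (R j), x ∉ Z

theorem Set.Finite.exists_isIncreasingEnum {α : Type*} [LinearOrder α] {Z : Set α} {a b : α}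
    (hZ : Z.Finite) (hZab : Z ⊆ Ioc a b) (hb : b ∈ Z) :
    ∃ k R, IsIncreasingEnum Z a b k R := by
  set s := hZ.toFinset
  have hbs : b ∈ s := hZ.mem_toFinset.mpr hb
  have hk : 0 < s.card := Finset.card_pos.mpr ⟨b, hbs⟩
  set e := s.orderEmbOfFin rfl
  have he : ∀ i, e i ∈ Z := fun i ↦ hZ.mem_toFinset.mp (s.orderEmbOfFin_mem rfl i)
  let R : ℕ → α := fun j ↦ if j = 0 then a else if h : j - 1 < s.card then e ⟨j - 1, h⟩ else b
  have hR : ∀ j (h1 : 1 ≤ j) (h2 : j ≤ s.card), R j = e ⟨j - 1, by omega⟩ := fun j h1 h2 ↦ by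
    simp only [R, if_neg (show j ≠ 0 by omega), dif_pos (show j - 1 < s.card by omega)]
  refine ⟨s.card, R, rfl, ?_, fun j h1 h2 ↦ ?_, fun j h1 h2 ↦ ?_, fun j h1 h2 x hx hxZ ↦ ?_⟩
  · rw [hR _ hk le_rfl, Finset.orderEmbOfFin_last rfl hk]
    exact le_antisymm (s.max'_le _ _ fun x hx ↦ (hZab (hZ.mem_toFinset.mp hx)).2) (s.le_max' b hbs)
  · rw [hR j h1 h2]
    rcases h1.eq_or_lt with rfl | h1
    · exact (hZab (he _)).1
    · rw [hR (j - 1) (by omega) (by omega)]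
      exact e.strictMono (Fin.mk_lt_mk.mpr (by omega))
  · rw [hR j h1 h2]
    exact he _
  · obtain ⟨i, rfl⟩ : x ∈ range e := by
      rw [Finset.range_orderEmbOfFin]
      exact hZ.mem_toFinset.mpr hxZ
    have hi : i < ⟨j - 1, by omega⟩ := e.lt_iff_lt.mp (by rw [← hR j h1 h2]; exact hx.2)
    rw [Fin.lt_def] at hi
    rcases h1.eq_or_lt with rfl | h1
    · exact Nat.not_lt_zero _ hi
    · have hi' : (⟨j - 1 - 1, by omega⟩ : Fin s.card) < i :=
        e.lt_iff_lt.mp (by rw [← hR (j - 1) (by omega) (by omega)]; exact hx.1)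
      rw [Fin.lt_def] at hi'
      simp only at hi hi'
      omega

namespace IsIncreasingEnum

variable {α : Type*} [Preorder α] {Z : Set α} {a b : α} {k j : ℕ} {R : ℕ → α}

theorem left_le (hR : IsIncreasingEnum Z a b k R) (hZ : Z ⊆ Ioc a b) (h1 : 1 ≤ j) (h2 : j ≤ k) :
    a ≤ R (j - 1) := by
  rcases h1.eq_or_lt with rfl | h1
  · exact hR.zero.ge
  · exact (hZ (hR.mem (j - 1) (by omega) (by omega))).1.le

theorem Ioo_subset (hR : IsIncreasingEnum Z a b k R) (hZ : Z ⊆ Ioc a b) (h1 : 1 ≤ j)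
    (h2 : j ≤ k) : Ioo (R (j - 1)) (R j) ⊆ Ioo a b :=
  Ioo_subset_Ioo (hR.left_le hZ h1 h2) (hZ (hR.mem j h1 h2)).2

end IsIncreasingEnum

structure IsRadialSolution (m : ℝ) (c v : ℝ → ℝ) : Prop where
  continuousOn : ContinuousOn v (Icc 0 1)
  contDiffOn : ContDiffOn ℝ 2 v (Ioc 0 1)
  continuousOn_coeff : ContinuousOn c (Ioc 0 1)
  deriv_flux : ∀ t ∈ Ioo (0 : ℝ) 1,
    deriv (fun s ↦ s ^ m * deriv v s) t = -(t ^ m * c t * v t)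

/-- `t^m v'(t)`; `derivWithin` makes the value at `t = 1` the left derivative instead of junk. -/
noncomputable def flux (m : ℝ) (v : ℝ → ℝ) (t : ℝ) : ℝ := t ^ m * derivWithin v (Ioc 0 1) t

abbrev IsNodalPartition (v : ℝ → ℝ) (k : ℕ) (R : ℕ → ℝ) : Prop :=
  IsIncreasingEnum (Ioc 0 1 ∩ v ⁻¹' {0}) 0 1 k R

namespace IsNodalPartition

variable {v : ℝ → ℝ} {k j : ℕ} {R : ℕ → ℝ}

theorem one_le (hR : IsNodalPartition v k R) : 1 ≤ k :=
  Nat.one_le_iff_ne_zero.mpr fun hk ↦ zero_ne_one (hR.zero.symm.trans (hk ▸ hR.last))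

theorem mem_Ioc (hR : IsNodalPartition v k R) (h1 : 1 ≤ j) (h2 : j ≤ k) : R j ∈ Ioc 0 1 :=
  (hR.mem j h1 h2).1

theorem apply_eq_zero (hR : IsNodalPartition v k R) (h1 : 1 ≤ j) (h2 : j ≤ k) : v (R j) = 0 :=
  (hR.mem j h1 h2).2

theorem Ioo_subset (hR : IsNodalPartition v k R) (h1 : 1 ≤ j) (h2 : j ≤ k) :
    Ioo (R (j - 1)) (R j) ⊆ Ioo 0 1 :=
  IsIncreasingEnum.Ioo_subset hR inter_subset_left h1 h2

theorem ne_zero (hR : IsNodalPartition v k R) (h1 : 1 ≤ j) (h2 : j ≤ k) {x : ℝ}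
    (hx : x ∈ Ioo (R (j - 1)) (R j)) : v x ≠ 0 := fun hvx ↦
  hR.notMem j h1 h2 x hx ⟨Ioo_subset_Ioc_self (hR.Ioo_subset h1 h2 hx), hvx⟩

theorem mem_Icc_inter (hR : IsNodalPartition v k R) (h1 : 1 ≤ j) (h2 : j ≤ k) {x : ℝ}
    (hx : x ∈ Icc (R (j - 1)) (R j)) (hx0 : 0 < x) : x ∈ Icc (R (j - 1)) (R j) ∩ Ioc 0 1 :=
  ⟨hx, hx0, hx.2.trans (hR.mem_Ioc h1 h2).2⟩

end IsNodalPartition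

theorem derivWithin_Ioc_eq_deriv {v : ℝ → ℝ} {t : ℝ} (ht : t ∈ Ioo (0 : ℝ) 1) :
    derivWithin v (Ioc 0 1) t = deriv v t :=
  derivWithin_of_mem_nhds (Ioc_mem_nhds ht.1 ht.2)

theorem flux_eq_of_mem_Ioo {m : ℝ} {v : ℝ → ℝ} {t : ℝ} (ht : t ∈ Ioo (0 : ℝ) 1) :
    flux m v t = t ^ m * deriv v t := by
  rw [flux, derivWithin_Ioc_eq_deriv ht]

namespace IsRadialSolution

variable {m : ℝ} {c v : ℝ → ℝ} {t : ℝ} {k : ℕ} {R : ℕ → ℝ}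

theorem hasDerivWithinAt (h : IsRadialSolution m c v) (ht : t ∈ Ioc (0 : ℝ) 1) :
    HasDerivWithinAt v (derivWithin v (Ioc 0 1) t) (Ioc 0 1) t :=
  (h.contDiffOn.differentiableOn (by norm_num) t ht).hasDerivWithinAt

theorem hasDerivWithinAt_of_flux (h : IsRadialSolution m c v) (ht : t ∈ Ioc (0 : ℝ) 1) :
    HasDerivWithinAt v (t ^ (-m) * flux m v t) (Ioc 0 1) t := by
  convert h.hasDerivWithinAt ht using 1
  rw [flux, ← mul_assoc, ← Real.rpow_add ht.1, neg_add_cancel, Real.rpow_zero, one_mul]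

theorem contDiffOn_flux (h : IsRadialSolution m c v) : ContDiffOn ℝ 1 (flux m v) (Ioc 0 1) := by
  have hpow : ContDiffOn ℝ 1 (fun t : ℝ ↦ t ^ m) (Ioc 0 1) := fun t ht ↦
    (Real.contDiffAt_rpow_const_of_ne ht.1.ne').contDiffWithinAt
  exact hpow.mul (h.contDiffOn.derivWithin (uniqueDiffOn_Ioc 0 1) (by norm_num))

theorem hasDerivWithinAt_flux (h : IsRadialSolution m c v) (ht : t ∈ Ioc (0 : ℝ) 1) :
    HasDerivWithinAt (flux m v) (-(t ^ m * c t * v t)) (Ioc 0 1) t := by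
  have hW := h.contDiffOn_flux
  have hrhs : ContinuousOn (fun t ↦ -(t ^ m * c t * v t)) (Ioc 0 1) :=
    (((continuousOn_id.rpow_const fun _ ht ↦ Or.inl ht.1.ne').mul h.continuousOn_coeff).mul
      (h.continuousOn.mono Ioc_subset_Icc_self)).neg
  have hint : EqOn (derivWithin (flux m v) (Ioc 0 1)) (fun t ↦ -(t ^ m * c t * v t)) (Ioo 0 1) :=
    fun s hs ↦ by
      have hnhds : Ioc (0 : ℝ) 1 ∈ 𝓝 s := Ioc_mem_nhds hs.1 hs.2
      show derivWithin _ _ s = -(s ^ m * c s * v s)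
      rw [derivWithin_of_mem_nhds hnhds, ← h.deriv_flux s hs]
      refine Filter.EventuallyEq.deriv_eq ?_
      filter_upwards [Ioo_mem_nhds hs.1 hs.2] with u hu using flux_eq_of_mem_Ioo hu
  -- `t = 1` is reached by continuity of both sides
  have hall := hint.of_subset_closure (hW.continuousOn_derivWithin (uniqueDiffOn_Ioc 0 1) le_rfl)
    hrhs Ioo_subset_Ioc_self
    (by rw [closure_Ioo zero_ne_one]; exact Ioc_subset_Icc_self)
  have hdt : derivWithin (flux m v) (Ioc 0 1) t = -(t ^ m * c t * v t) := hall ht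
  exact hdt ▸ (hW.differentiableOn one_ne_zero t ht).hasDerivWithinAt

theorem derivWithin_ne_zero (h : IsRadialSolution m c v) (hv0 : v 0 ≠ 0) (ht : t ∈ Ioc (0 : ℝ) 1)
    (hvt : v t = 0) : derivWithin v (Ioc 0 1) t ≠ 0 := by
  intro hdvt
  have hS : ∀ {a}, 0 < a → Icc a t ⊆ Ioc 0 1 := fun ha s hs ↦ ⟨ha.trans_le hs.1, hs.2.trans ht.2⟩
  have hleft : ∀ {a s}, 0 < a → s ∈ Ioc a t → Ioc 0 1 ∈ 𝓝[≤] s := fun ha hs ↦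
    Ioc_mem_nhdsLE_of_mem ⟨ha.trans hs.1, hs.2.trans ht.2⟩
  have hvanish : ∀ a ∈ Ioo 0 t, v a = 0 := fun a ha ↦
    eqOn_zero_of_hasDerivWithinAt_planar (x := v) (y := flux m v)
      (p := fun s ↦ s ^ (-m)) (q := fun s ↦ -(s ^ m * c s))
      ((continuousOn_id.rpow_const fun s hs ↦ Or.inl (ha.1.trans_le hs.1).ne').mono le_rfl)
      (((continuousOn_id.rpow_const fun s hs ↦ Or.inl hs.1.ne').mul
        h.continuousOn_coeff).neg.mono (hS ha.1))
      (h.continuousOn.mono ((hS ha.1).trans Ioc_subset_Icc_self))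
      (h.contDiffOn_flux.continuousOn.mono (hS ha.1))
      (fun s hs ↦ (h.hasDerivWithinAt_of_flux (hS ha.1 (Ioc_subset_Icc_self hs))
        |>.mono_of_mem_nhdsWithin (hleft ha.1 hs)))
      (fun s hs ↦ (h.hasDerivWithinAt_flux (hS ha.1 (Ioc_subset_Icc_self hs))
        |>.mono_of_mem_nhdsWithin (hleft ha.1 hs)).congr_deriv (by ring))
      hvt (by rw [flux, hdvt, mul_zero]) (left_mem_Icc.mpr ha.2.le)
  have hlim : Tendsto v (𝓝[>] 0) (𝓝 (v 0)) :=
    (h.continuousOn 0 (left_mem_Icc.mpr zero_le_one)).mono_of_mem_nhdsWithin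
      (Icc_mem_nhdsGT zero_lt_one) |>.tendsto
  exact hv0 (tendsto_nhds_unique hlim (tendsto_const_nhds.congr'
    (eventually_of_mem (Ioo_mem_nhdsGT ht.1) fun a ha ↦ (hvanish a ha).symm)))

theorem eventually_pos (h : IsRadialSolution m c v) (hv0 : 0 < v 0) :
    ∀ᶠ t in 𝓝[>] 0, 0 < v t :=
  ((h.continuousOn 0 (left_mem_Icc.mpr zero_le_one)).mono_of_mem_nhdsWithin
    (Icc_mem_nhdsGT zero_lt_one)).eventually (eventually_gt_nhds hv0)

theorem finite_zeros (h : IsRadialSolution m c v) (hv0 : 0 < v 0) :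
    (Ioc 0 1 ∩ v ⁻¹' {0}).Finite := by
  obtain ⟨δ, hδ, hpos⟩ := mem_nhdsGT_iff_exists_Ioo_subset.mp (h.eventually_pos hv0)
  have hsub : Icc δ 1 ⊆ Ioc 0 1 := fun t ht ↦ ⟨(mem_Ioi.mp hδ).trans_le ht.1, ht.2⟩
  refine (finite_zeros_of_hasDerivWithinAt isCompact_Icc hsub (fun t ht ↦ h.hasDerivWithinAt ht)
    (fun t ht ↦ h.derivWithin_ne_zero hv0.ne' (hsub ht))).subset ?_
  rintro t ⟨ht, hvt⟩
  refine ⟨⟨not_lt.mp fun htδ ↦ ?_, ht.2⟩, hvt⟩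
  exact (hpos ⟨ht.1, htδ⟩ : 0 < v t).ne' hvt

theorem exists_isNodalPartition (h : IsRadialSolution m c v) (hv0 : 0 < v 0) (hv1 : v 1 = 0) :
    ∃ k R, IsNodalPartition v k R :=
  (h.finite_zeros hv0).exists_isIncreasingEnum inter_subset_left
    ⟨right_mem_Ioc.mpr zero_lt_one, hv1⟩

theorem neg_derivWithin_of_pos_left (h : IsRadialSolution m c v) (hv0 : v 0 ≠ 0) {a b σ : ℝ}
    (hσ : σ ≠ 0) (hab : a < b) (hb : b ∈ Ioc (0 : ℝ) 1) (hvb : v b = 0)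
    (hpos : ∀ x ∈ Ioo a b, 0 < σ * v x) : σ * derivWithin v (Ioc 0 1) b < 0 :=
  lt_of_le_of_ne
    ((((h.hasDerivWithinAt hb).mono_of_mem_nhdsWithin (Ioc_mem_nhdsLE_of_mem hb)).const_mul
      σ).nonpos_of_pos_left hab (by rw [hvb, mul_zero]) hpos)
    (mul_ne_zero hσ (h.derivWithin_ne_zero hv0 hb hvb))

theorem sign_alternates (h : IsRadialSolution m c v) (hv0 : 0 < v 0)
    (hR : IsNodalPartition v k R) :
    ∀ j, 1 ≤ j → j ≤ k → ∀ x ∈ Ioo (R (j - 1)) (R j), 0 < (-1) ^ (j - 1) * v x := by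
  have hcont : ∀ {j}, 1 ≤ j → j ≤ k → ∀ σ : ℝ,
      ContinuousOn (fun x ↦ σ * v x) (Ioo (R (j - 1)) (R j)) :=
    fun h1 h2 σ ↦ continuousOn_const.mul
      (h.continuousOn.mono ((hR.Ioo_subset h1 h2).trans Ioo_subset_Icc_self))
  have hne : ∀ {j}, 1 ≤ j → j ≤ k → ∀ {σ : ℝ}, σ ≠ 0 →
      ∀ x ∈ Ioo (R (j - 1)) (R j), σ * v x ≠ 0 :=
    fun h1 h2 _ hσ _ hx ↦ mul_ne_zero hσ (hR.ne_zero h1 h2 hx)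
  intro j h1
  induction j, h1 using Nat.le_induction with
  | base =>
    intro hk
    obtain ⟨y, hy, hvy⟩ := ((h.eventually_pos hv0).and
      (Ioo_mem_nhdsGT (hR.mem_Ioc le_rfl hk).1)).exists
    have hy' : y ∈ Ioo (R (1 - 1)) (R 1) := by rw [Nat.sub_self, hR.zero]; exact hvy
    simpa using isPreconnected_Ioo.pos_of_ne_zero (hcont le_rfl hk 1) (hne le_rfl hk one_ne_zero)
      hy' (by simpa using hy)
  | succ j h1 ih =>
    intro hk
    have hRj : R j ∈ Ioo 0 1 := ⟨(hR.mem_Ioc h1 (by omega)).1,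
      (hR.lt (j + 1) (by omega) hk).trans_le (hR.mem_Ioc (by omega) hk).2⟩
    have hder := h.neg_derivWithin_of_pos_left hv0.ne' (pow_ne_zero _ (by norm_num))
      (hR.lt j h1 (by omega)) (Ioo_subset_Ioc_self hRj) (hR.apply_eq_zero h1 (by omega))
      (ih (by omega))
    obtain ⟨y, hy, hvy⟩ := ((h.hasDerivWithinAt (Ioo_subset_Ioc_self hRj)).hasDerivAt
      (Ioc_mem_nhds hRj.1 hRj.2)).const_mul ((-1 : ℝ) ^ (j - 1)) |>.exists_neg_right
      (hR.lt (j + 1) (by omega) hk) (by rw [hR.apply_eq_zero h1 (by omega), mul_zero]) hder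
    have hy' : y ∈ Ioo (R (j + 1 - 1)) (R (j + 1)) := by rwa [Nat.add_sub_cancel]
    refine isPreconnected_Ioo.pos_of_ne_zero (hcont (by omega) hk _)
      (hne (by omega) hk (pow_ne_zero _ (by norm_num))) hy' ?_
    rw [Nat.add_sub_cancel, neg_one_pow_sub_one h1, neg_mul]
    exact neg_pos.mpr hvy

theorem strictAntiOn_flux (h : IsRadialSolution m c v) (hc : ∀ t ∈ Ioo (0 : ℝ) 1, 0 < c t)
    {a b σ : ℝ} (hpos : ∀ x ∈ Ioo a b, 0 < σ * v x) :
    StrictAntiOn (fun t ↦ σ * flux m v t) (Icc a b ∩ Ioc 0 1) := by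
  have hint : interior (Icc a b ∩ Ioc 0 1) = Ioo a b ∩ Ioo 0 1 := by
    rw [interior_inter, interior_Icc, interior_Ioc]
  refine strictAntiOn_of_hasDerivWithinAt_neg ((convex_Icc a b).inter (convex_Ioc 0 1))
    (continuousOn_const.mul (h.contDiffOn_flux.continuousOn.mono inter_subset_right))
    (f' := fun t ↦ σ * -(t ^ m * c t * v t)) (fun x hx ↦ ?_) (fun x hx ↦ ?_) <;> rw [hint] at hx
  · exact (((h.hasDerivWithinAt_flux (Ioo_subset_Ioc_self hx.2)).hasDerivAt
      (Ioc_mem_nhds hx.2.1 hx.2.2)).const_mul σ).hasDerivWithinAt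
  · rw [show σ * -(x ^ m * c x * v x) = -(x ^ m * c x * (σ * v x)) by ring]
    exact neg_neg_of_pos
      (mul_pos (mul_pos (Real.rpow_pos_of_pos hx.2.1 m) (hc x hx.2)) (hpos x hx.1))

theorem flux_neg_at_nodes (h : IsRadialSolution m c v) (hv0 : 0 < v 0)
    (hR : IsNodalPartition v k R) {j : ℕ} (h1 : 1 ≤ j) (h2 : j ≤ k) :
    (-1) ^ (j - 1) * flux m v (R j) < 0 := by
  have hder := h.neg_derivWithin_of_pos_left hv0.ne' (pow_ne_zero _ (by norm_num))
    (hR.lt j h1 h2) (hR.mem_Ioc h1 h2) (hR.apply_eq_zero h1 h2) (h.sign_alternates hv0 hR j h1 h2)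
  rw [flux, mul_left_comm]
  exact mul_neg_of_pos_of_neg (Real.rpow_pos_of_pos (hR.mem_Ioc h1 h2).1 m) hder

theorem exists_flux_eq_zero (h : IsRadialSolution m c v) (hv0 : 0 < v 0)
    (hR : IsNodalPartition v k R) {j : ℕ} (h1 : 2 ≤ j) (h2 : j ≤ k) :
    ∃ ρ ∈ Ioo (R (j - 1)) (R j), flux m v ρ = 0 := by
  have hsub : Icc (R (j - 1)) (R j) ⊆ Ioc 0 1 := fun x hx ↦
    (hR.mem_Icc_inter (by omega) h2 hx ((hR.mem_Ioc (by omega) (by omega)).1.trans_le hx.1)).2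
  have hleft : 0 < (-1) ^ (j - 1) * flux m v (R (j - 1)) := by
    have := h.flux_neg_at_nodes hv0 hR (j := j - 1) (by omega) (by omega)
    rw [neg_one_pow_sub_one (by omega : 1 ≤ j - 1), neg_mul]
    exact neg_pos.mpr this
  obtain ⟨ρ, hρ, hρ0⟩ := intermediate_value_Ioo' (hR.lt j (by omega) h2).le
    (continuousOn_const.mul (h.contDiffOn_flux.continuousOn.mono hsub))
    ⟨h.flux_neg_at_nodes hv0 hR (by omega) h2, hleft⟩
  exact ⟨ρ, hρ, (mul_eq_zero.mp hρ0).resolve_left (pow_ne_zero _ (by norm_num))⟩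

theorem flux_neg_of_mem_Ioc (h : IsRadialSolution m c v) (hc : ∀ t ∈ Ioo (0 : ℝ) 1, 0 < c t)
    (hv0 : 0 < v 0) (hlim : Tendsto (fun t ↦ t ^ m * deriv v t) (𝓝[>] 0) (𝓝 0))
    (hR : IsNodalPartition v k R) : ∀ x ∈ Ioc 0 (R 1), flux m v x < 0 := by
  have hk := hR.one_le
  have hanti := h.strictAntiOn_flux hc (h.sign_alternates hv0 hR 1 le_rfl hk)
  simp only [Nat.sub_self, pow_zero, one_mul, hR.zero] at hanti
  refine (hanti.mono fun y hy ↦ ⟨⟨hy.1.le, hy.2⟩, hy.1, hy.2.trans (hR.mem_Ioc le_rfl hk).2⟩)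
    |>.neg_of_tendsto_nhdsGT ?_
  exact hlim.congr' (eventually_of_mem (Ioo_mem_nhdsGT zero_lt_one)
    fun t ht ↦ (flux_eq_of_mem_Ioo ht).symm)

theorem flux_neg_between (h : IsRadialSolution m c v) (hc : ∀ t ∈ Ioo (0 : ℝ) 1, 0 < c t)
    (hv0 : 0 < v 0) (hlim : Tendsto (fun t ↦ t ^ m * deriv v t) (𝓝[>] 0) (𝓝 0))
    (hR : IsNodalPartition v k R) {r : ℕ → ℝ} (hr1 : r 1 = 0) (hrk : r (k + 1) = 1)
    (hr : ∀ j, 2 ≤ j → j ≤ k → r j ∈ Ioo (R (j - 1)) (R j) ∧ flux m v (r j) = 0) :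
    ∀ j, 1 ≤ j → j ≤ k → ∀ x ∈ Ioo (r j) (r (j + 1)), (-1) ^ (j - 1) * flux m v x < 0 := by
  have hanti := fun j h1 h2 ↦ h.strictAntiOn_flux hc (h.sign_alternates hv0 hR j h1 h2)
  have hr_mem : ∀ j, 2 ≤ j → j ≤ k → r j ∈ Icc (R (j - 1)) (R j) ∩ Ioc 0 1 := fun j h1 h2 ↦
    hR.mem_Icc_inter (by omega) h2 (Ioo_subset_Icc_self (hr j h1 h2).1)
      (hR.Ioo_subset (by omega) h2 (hr j h1 h2).1).1
  have hleft : ∀ j, 1 ≤ j → j ≤ k → ∀ x ∈ Ioc (r j) (R j), (-1) ^ (j - 1) * flux m v x < 0 := by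
    intro j h1 h2 x hx
    rcases h1.eq_or_lt with rfl | h1
    · rw [hr1] at hx
      simpa using h.flux_neg_of_mem_Ioc hc hv0 hlim hR x hx
    · have hρ := hr_mem j h1 h2
      have := hanti j (by omega) h2 hρ (hR.mem_Icc_inter (by omega) h2
        ⟨hρ.1.1.trans hx.1.le, hx.2⟩ (hρ.2.1.trans hx.1)) hx.1
      simpa [(hr j h1 h2).2] using this
  have hright : ∀ j, 2 ≤ j → j ≤ k → ∀ x ∈ Ico (R (j - 1)) (r j),
      0 < (-1) ^ (j - 1) * flux m v x := by
    intro j h1 h2 x hx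
    have hρ := hr_mem j h1 h2
    have := hanti j (by omega) h2 (hR.mem_Icc_inter (by omega) h2 ⟨hx.1, hx.2.le.trans hρ.1.2⟩
      ((hR.mem_Ioc (by omega) (by omega)).1.trans_le hx.1)) hρ hx.2
    simpa [(hr j h1 h2).2] using this
  intro j h1 h2 x hx
  rcases le_or_gt x (R j) with hxR | hxR
  · exact hleft j h1 h2 x ⟨hx.1, hxR⟩
  · have hjk : j + 1 ≤ k := by
      by_contra hjk
      obtain rfl : j = k := by omega
      linarith [hx.2, hR.last, hrk]
    have := hright (j + 1) (by omega) hjk x ⟨by simpa using hxR.le, hx.2⟩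
    rw [Nat.add_sub_cancel, neg_one_pow_sub_one h1, neg_mul] at this
    linarith

theorem exists_critical_points (h : IsRadialSolution m c v) (hc : ∀ t ∈ Ioo (0 : ℝ) 1, 0 < c t)
    (hv0 : 0 < v 0) (hlim : Tendsto (fun t ↦ t ^ m * deriv v t) (𝓝[>] 0) (𝓝 0))
    (hR : IsNodalPartition v k R) :
    ∃ r : ℕ → ℝ, r 1 = 0 ∧ r (k + 1) = 1 ∧ (∀ j, 1 ≤ j → j ≤ k → r j < R j) ∧
      (∀ j, 1 ≤ j → j + 1 ≤ k → R j < r (j + 1)) ∧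
      ∀ j, 1 ≤ j → j ≤ k → (∀ x ∈ Ioo (r j) (r (j + 1)), 0 < (-1) ^ j * deriv v x) ∧
        (2 ≤ j → deriv v (r j) = 0) := by
  have hρ : ∀ j, ∃ ρ, (j ≤ 1 → ρ = 0) ∧ (k < j → ρ = 1) ∧
      (2 ≤ j → j ≤ k → ρ ∈ Ioo (R (j - 1)) (R j) ∧ flux m v ρ = 0) := fun j ↦ by
    by_cases hj : 2 ≤ j ∧ j ≤ k
    · obtain ⟨ρ, hρ, hρ0⟩ := h.exists_flux_eq_zero hv0 hR hj.1 hj.2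
      exact ⟨ρ, fun _ ↦ by omega, fun _ ↦ by omega, fun _ _ ↦ ⟨hρ, hρ0⟩⟩
    · by_cases hj1 : j ≤ 1
      · exact ⟨0, fun _ ↦ rfl, fun _ ↦ by have := hR.one_le; omega, fun _ _ ↦ by omega⟩
      · exact ⟨1, fun _ ↦ by omega, fun _ ↦ rfl, fun _ _ ↦ by omega⟩
  choose r hr1 hrk hr using hρ
  have hneg := h.flux_neg_between hc hv0 hlim hR (hr1 1 le_rfl) (hrk _ (lt_add_one k)) hr
  have hr_lt : ∀ j, 1 ≤ j → j ≤ k → r j < R j := fun j h1 h2 ↦ by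
    rcases h1.eq_or_lt with rfl | h1
    · rw [hr1 1 le_rfl]
      exact (hR.mem_Ioc le_rfl h2).1
    · exact (hr j h1 h2).1.2
  have hr_pos : ∀ j, 1 ≤ j → j ≤ k → 0 ≤ r j := fun j h1 h2 ↦ by
    rcases h1.eq_or_lt with rfl | h1
    · exact (hr1 1 le_rfl).ge
    · exact (hR.Ioo_subset (by omega) h2 (hr j h1 h2).1).1.le
  have hr_le : ∀ j, 1 ≤ j → j ≤ k → r (j + 1) ≤ 1 := fun j h1 h2 ↦ by
    rcases h2.lt_or_eq with h2 | rfl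
    · exact ((hr (j + 1) (by omega) h2).1.2.trans_le (hR.mem_Ioc (by omega) h2).2).le
    · exact (hrk _ (lt_add_one j)).le
  refine ⟨r, hr1 1 le_rfl, hrk _ (lt_add_one k), hr_lt,
    fun j h1 h2 ↦ by simpa using (hr (j + 1) (by omega) h2).1.1,
    fun j h1 h2 ↦ ⟨fun x hx ↦ ?_, fun hj ↦ ?_⟩⟩
  · have hx01 : x ∈ Ioo 0 1 := ⟨(hr_pos j h1 h2).trans_lt hx.1, hx.2.trans_le (hr_le j h1 h2)⟩
    have := hneg j h1 h2 x hx
    rw [flux_eq_of_mem_Ioo hx01, mul_left_comm] at this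
    rw [neg_one_pow_sub_one h1, neg_mul]
    exact neg_pos.mpr (neg_of_mul_neg_right this (Real.rpow_pos_of_pos hx01.1 m).le)
  · obtain ⟨hmem, hzero⟩ := hr j hj h2
    have hx01 := hR.Ioo_subset (by omega) h2 hmem
    rw [flux_eq_of_mem_Ioo hx01] at hzero
    exact (mul_eq_zero.mp hzero).resolve_left (Real.rpow_pos_of_pos hx01.1 m).ne'

end IsRadialSolution

theorem nodal_structure_general (N : ℕ) (hN : 3 ≤ N) (α ε : ℝ) (hε : 0 < ε)
    (v : ℝ → ℝ)
    (hc : ContinuousOn v (Set.Icc 0 1))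
    (hc2 : ContDiffOn ℝ 2 v (Set.Ioc 0 1))
    (hode : ∀ r ∈ Set.Ioo (0 : ℝ) 1,
      deriv (fun s : ℝ => s ^ ((N : ℝ) - 1) * deriv v s) r
        = -(r ^ ((N : ℝ) - 1) * (|v r| ^ (4 / ((N : ℝ) - 2)) * v r + ε * r ^ α * v r)))
    (hv0 : 0 < v 0) (hv1 : v 1 = 0)
    (hlim : Filter.Tendsto (fun r : ℝ => r ^ ((N : ℝ) - 1) * deriv v r)
      (nhdsWithin 0 (Set.Ioi 0)) (nhds 0)) :
    ∃ k : ℕ, 1 ≤ k ∧ ∃ R r : ℕ → ℝ,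
      R 0 = 0 ∧ r 1 = 0 ∧ R k = 1 ∧ r (k + 1) = 1 ∧
      (∀ j, 1 ≤ j → j ≤ k → r j < R j) ∧
      (∀ j, 1 ≤ j → j + 1 ≤ k → R j < r (j + 1)) ∧
      (∀ j, 1 ≤ j → j ≤ k →
        (∀ x ∈ Set.Ioo (R (j - 1)) (R j), 0 < (-1 : ℝ) ^ (j - 1) * v x) ∧
        v (R j) = 0 ∧
        (∀ x ∈ Set.Ioo (r j) (r (j + 1)), 0 < (-1 : ℝ) ^ j * deriv v x) ∧
        (2 ≤ j → deriv v (r j) = 0)) := by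
  have hq : 0 ≤ 4 / ((N : ℝ) - 2) :=
    div_nonneg (by norm_num) (by linarith [(Nat.ofNat_le_cast.mpr hN : (3 : ℝ) ≤ N)])
  set c : ℝ → ℝ := fun t ↦ |v t| ^ (4 / ((N : ℝ) - 2)) + ε * t ^ α
  have h : IsRadialSolution ((N : ℝ) - 1) c v :=
    { continuousOn := hc
      contDiffOn := hc2
      continuousOn_coeff := ((hc.mono Ioc_subset_Icc_self).abs.rpow_const fun _ _ ↦ Or.inr hq).add
        (continuousOn_const.mul (continuousOn_id.rpow_const fun _ ht ↦ Or.inl ht.1.ne'))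
      deriv_flux := fun t ht ↦ by rw [hode t ht]; ring }
  have hcpos : ∀ t ∈ Ioo (0 : ℝ) 1, 0 < c t := fun t ht ↦
    add_pos_of_nonneg_of_pos (by positivity) (mul_pos hε (Real.rpow_pos_of_pos ht.1 α))
  obtain ⟨k, R, hR⟩ := h.exists_isNodalPartition hv0 hv1
  obtain ⟨r, hr1, hrk, hrR, hRr, hr⟩ := h.exists_critical_points hcpos hv0 hlim hR
  exact ⟨k, hR.one_le, R, r, hR.zero, hr1, hR.last, hrk, hrR, hRr, fun j h1 h2 ↦
    ⟨h.sign_alternates hv0 hR j h1 h2, hR.apply_eq_zero h1 h2, (hr j h1 h2).1, (hr j h1 h2).2⟩⟩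

/-- Nodal structure for radial solutions: a nontrivial solution of the radial ODE
`-(r^{N-1}v')' = r^{N-1}(|v|^{4/(N-2)}v + ε r^α v)` on `(0,1)` with `ε > 0`, `v(0) > 0`,
`v(1) = 0` has finitely many interlaced nodal points `R_j` and critical points `r_j`. -/
theorem nodal_structure (N : ℕ) (hN : 3 ≤ N) (α ε : ℝ) (hα : -2 < α) (hε : 0 < ε)
    (v : ℝ → ℝ)
    (hc : ContinuousOn v (Set.Icc 0 1))
    (hc2 : ContDiffOn ℝ 2 v (Set.Ioc 0 1))
    (hode : ∀ r ∈ Set.Ioo (0 : ℝ) 1,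
      deriv (fun s : ℝ => s ^ ((N : ℝ) - 1) * deriv v s) r
        = -(r ^ ((N : ℝ) - 1) * (|v r| ^ (4 / ((N : ℝ) - 2)) * v r + ε * r ^ α * v r)))
    (hv0 : 0 < v 0) (hv1 : v 1 = 0)
    (hlim : Filter.Tendsto (fun r : ℝ => r ^ ((N : ℝ) - 1) * deriv v r)
      (nhdsWithin 0 (Set.Ioi 0)) (nhds 0)) :
    ∃ k : ℕ, 1 ≤ k ∧ ∃ R r : ℕ → ℝ,
      R 0 = 0 ∧ r 1 = 0 ∧ R k = 1 ∧ r (k + 1) = 1 ∧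
      (∀ j, 1 ≤ j → j ≤ k → r j < R j) ∧
      (∀ j, 1 ≤ j → j + 1 ≤ k → R j < r (j + 1)) ∧
      (∀ j, 1 ≤ j → j ≤ k →
        (∀ x ∈ Set.Ioo (R (j - 1)) (R j), 0 < (-1 : ℝ) ^ (j - 1) * v x) ∧
        v (R j) = 0 ∧
        (∀ x ∈ Set.Ioo (r j) (r (j + 1)), 0 < (-1 : ℝ) ^ j * deriv v x) ∧
        (2 ≤ j → deriv v (r j) = 0)) :=
  nodal_structure_general N hN α ε hε v hc hc2 hode hv0 hv1 hlim
end
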